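/- arXiv:math/0406401 — 2 statements merged into one kernel-verified Lean document; each statement's English description precedes it below -/
import Mathlib

section
/- For every integer q ≥ 2, the integrals J(-2,1,q) = ∫₀¹ x^{-2} Li₁(x) Li_q(x) dx satisfy J(-2,1,q) = ζ(q+1) + J(-2,1,q-1) - J(-1,1,q-1). Furthermore, J(-2,1,1) = ∫₀¹ log²(1-x)/x² dx = 2ζ(2). -/
/-!
Expanding both polylogarithms and integrating termwise gives
`J(s-2,1,q) = ∑_{m,n ≥ 0} 1/((n+1)(m+1)^q(m+n+s+1)) = ∑_m A(m+s)/(m+1)^q` with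
`A(c) = ∑_n 1/((n+1)(n+c+1))` (`innerSum c`), so `A(0) = ζ(2)` and `A(c) = H_c/c` for `c > 0`.
Everything follows from the telescoping recurrence `(m+1) A(m+1) = m A(m) + 1/(m+1)`, i.e.
`A(m)/(m+1)^(r+1) + A(m+1)/(m+1)^r = 1/(m+1)^(r+2) + A(m)/(m+1)^r`.
Summed over `m` with `r = q-1` this is the recursion; with `r = 0` it telescopes to
`∑_m A(m)/(m+1) = ζ(2) + A(0) = 2ζ(2)`, a double series that dominates all the others and so
justifies the termwise integration.
-/

open MeasureTheory

/-- Polylogarithm `Li n x = ∑_{k ≥ 1} x^k / k^n` (for an integer index `n`). -/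
noncomputable def Li (n : ℤ) (x : ℝ) : ℝ := ∑' k : ℕ+, x ^ (k : ℕ) / ((k : ℕ) : ℝ) ^ n

/-- Zeta value `ζ(n) = ∑_{k ≥ 1} 1 / k^n` (equals `0` at `n = 1` by divergence). -/
noncomputable def zetaR (n : ℕ) : ℝ := ∑' k : ℕ+, 1 / ((k : ℕ) : ℝ) ^ n

/-- The set of zeta values at integers `n ≥ 2`. -/
def zetaValues : Set ℝ := {x : ℝ | ∃ n : ℕ, 2 ≤ n ∧ x = zetaR n}
/-- The integral `J(m,p,q) = ∫₀¹ x^m Li_p(x) Li_q(x) dx` (with integer exponent `m`). -/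
noncomputable def J (m : ℤ) (p q : ℤ) : ℝ := ∫ x in (0:ℝ)..1, x ^ m * Li p x * Li q x

open Filter Topology

theorem hasSum_sub_succ_of_antitone {f : ℕ → ℝ} {l : ℝ} (hf : Antitone f)
    (hl : Tendsto f atTop (𝓝 l)) : HasSum (fun n ↦ f n - f (n + 1)) (f 0 - l) := by
  rw [hasSum_iff_tendsto_nat_of_nonneg (fun n ↦ sub_nonneg.2 (hf n.le_succ))]
  simp_rw [Finset.sum_range_sub']
  exact tendsto_const_nhds.sub (hl.comp (tendsto_add_atTop_nat 0))

theorem tendsto_one_div_add_atTop_nhds_zero (c : ℝ) :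
    Tendsto (fun n : ℕ ↦ 1 / ((n : ℝ) + c)) atTop (𝓝 0) := by
  simp only [one_div]
  exact (tendsto_atTop_add_const_right _ c tendsto_natCast_atTop_atTop).inv_tendsto_atTop

noncomputable def innerSum (c : ℕ) : ℝ := ∑' n : ℕ, 1 / (((n : ℝ) + 1) * (n + c + 1))

theorem summable_innerSum (c : ℕ) :
    Summable fun n : ℕ ↦ 1 / (((n : ℝ) + 1) * (n + c + 1)) := by
  refine .of_nonneg_of_le (fun n ↦ by positivity) (fun n ↦ ?_)
    ((summable_nat_add_iff 1).2 (Real.summable_one_div_nat_pow.2 one_lt_two))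
  push_cast
  gcongr
  nlinarith

theorem succ_mul_innerSum_succ (m : ℕ) :
    (m + 1) * innerSum (m + 1) = m * innerSum m + 1 / (m + 1) := by
  have hf : Antitone fun n : ℕ ↦ 1 / ((n : ℝ) + (m + 1)) :=
    antitone_nat_of_succ_le fun n ↦ by
      apply one_div_le_one_div_of_le (by positivity)
      push_cast; linarith
  have htel := hasSum_sub_succ_of_antitone hf (tendsto_one_div_add_atTop_nhds_zero _)
  have hdiff := ((summable_innerSum (m + 1)).hasSum.mul_left ((m : ℝ) + 1)).sub
    ((summable_innerSum m).hasSum.mul_left (m : ℝ))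
  have hterm : ∀ n : ℕ, (m + 1 : ℝ) * (1 / ((n + 1) * (n + ↑(m + 1) + 1)))
      - m * (1 / ((n + 1) * (n + m + 1)))
      = 1 / ((n : ℝ) + (m + 1)) - 1 / (((n + 1 : ℕ) : ℝ) + (m + 1)) := by
    intro n
    push_cast
    field_simp
    ring
  simp only [hterm] at hdiff
  have := hdiff.unique htel
  simp only [Nat.cast_zero, zero_add, sub_zero] at this
  unfold innerSum
  linarith

theorem innerSum_antitone : Antitone innerSum :=
  antitone_nat_of_succ_le fun c ↦
    (summable_innerSum (c + 1)).tsum_le_tsum (fun n ↦ by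
      apply one_div_le_one_div_of_le (by positivity)
      push_cast; gcongr; linarith) (summable_innerSum c)

theorem tendsto_innerSum_atTop : Tendsto innerSum atTop (𝓝 0) := by
  have h := tendsto_tsum_of_dominated_convergence (summable_innerSum 0)
    (f := fun (c n : ℕ) ↦ 1 / (((n : ℝ) + 1) * (n + c + 1))) (g := fun _ ↦ 0)
    (fun n ↦ by
      have := (tendsto_one_div_add_atTop_nhds_zero ((n : ℝ) + 1)).const_mul (1 / ((n : ℝ) + 1))
      rw [mul_zero] at this
      refine this.congr fun c ↦ ?_
      rw [one_div_mul_one_div]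
      ring_nf)
    (.of_forall fun c n ↦ by
      rw [Real.norm_of_nonneg (by positivity)]
      apply one_div_le_one_div_of_le (by positivity)
      push_cast; gcongr; linarith)
  rw [tsum_zero] at h
  exact h

theorem hasSum_zetaR {n : ℕ} (hn : 2 ≤ n) :
    HasSum (fun m : ℕ ↦ 1 / ((m : ℝ) + 1) ^ n) (zetaR n) := by
  have hs : Summable fun m : ℕ ↦ 1 / ((m : ℝ) + 1) ^ n := by
    simpa using (summable_nat_add_iff 1).2 (Real.summable_one_div_nat_pow.2 hn)
  rw [zetaR, tsum_pnat_eq_tsum_succ (f := fun k ↦ 1 / (k : ℝ) ^ n)]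
  simpa using hs.hasSum

theorem innerSum_zero : innerSum 0 = zetaR 2 := by
  rw [← (hasSum_zetaR le_rfl).tsum_eq, innerSum]
  congr 1 with n
  push_cast
  ring

theorem innerSum_div_pow_add (m r : ℕ) :
    innerSum m / ((m : ℝ) + 1) ^ (r + 1) + innerSum (m + 1) / ((m : ℝ) + 1) ^ r
      = 1 / ((m : ℝ) + 1) ^ (r + 2) + innerSum m / ((m : ℝ) + 1) ^ r := by
  have h := succ_mul_innerSum_succ m
  have hm : (m : ℝ) + 1 ≠ 0 := by positivity
  rw [pow_succ, pow_succ, pow_succ]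
  field_simp at h ⊢
  linear_combination h

theorem hasSum_innerSum_div_succ :
    HasSum (fun m : ℕ ↦ innerSum m / ((m : ℝ) + 1)) (2 * zetaR 2) := by
  have h := (hasSum_zetaR le_rfl).add
    (hasSum_sub_succ_of_antitone innerSum_antitone tendsto_innerSum_atTop)
  rw [innerSum_zero, sub_zero, ← two_mul] at h
  convert h using 2 with m
  have := innerSum_div_pow_add m 0
  simp only [zero_add, pow_one, pow_zero, div_one] at this
  linarith

noncomputable def jSeriesTerm (s q m n : ℕ) : ℝ :=
  1 / (((n : ℝ) + 1) * ((m : ℝ) + 1) ^ q * (m + n + s + 1))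

theorem jSeriesTerm_nonneg (s q m n : ℕ) : 0 ≤ jSeriesTerm s q m n := by
  unfold jSeriesTerm; positivity

theorem hasSum_jSeriesTerm_fiber (s q m : ℕ) :
    HasSum (fun n ↦ jSeriesTerm s q m n) (innerSum (m + s) / ((m : ℝ) + 1) ^ q) := by
  refine ((summable_innerSum (m + s)).hasSum.div_const (((m : ℝ) + 1) ^ q)).congr_fun fun n ↦ ?_
  rw [jSeriesTerm, div_div]
  push_cast
  ring_nf

theorem summable_jSeriesTerm (s : ℕ) {q : ℕ} (hq : 1 ≤ q) :
    Summable fun p : ℕ × ℕ ↦ jSeriesTerm s q p.1 p.2 := by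
  have h01 : Summable fun p : ℕ × ℕ ↦ jSeriesTerm 0 1 p.1 p.2 := by
    refine (summable_prod_of_nonneg fun p ↦ jSeriesTerm_nonneg 0 1 p.1 p.2).2
      ⟨fun m ↦ (hasSum_jSeriesTerm_fiber 0 1 m).summable, ?_⟩
    simp only [fun m ↦ (hasSum_jSeriesTerm_fiber 0 1 m).tsum_eq, add_zero, pow_one]
    exact hasSum_innerSum_div_succ.summable
  refine h01.of_nonneg_of_le (fun p ↦ jSeriesTerm_nonneg s q p.1 p.2) fun ⟨m, n⟩ ↦ ?_
  unfold jSeriesTerm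
  apply one_div_le_one_div_of_le (by positivity)
  gcongr <;> simp

theorem Li_natCast_eq_tsum (n : ℕ) (x : ℝ) :
    Li n x = ∑' m : ℕ, x ^ (m + 1) / ((m : ℝ) + 1) ^ n := by
  rw [Li, tsum_pnat_eq_tsum_succ (f := fun k ↦ x ^ k / (k : ℝ) ^ (n : ℤ))]
  simp [zpow_natCast]

theorem summable_norm_pow_succ_div {x : ℝ} (hx0 : 0 ≤ x) (hx1 : x < 1) (n : ℕ) :
    Summable fun m : ℕ ↦ ‖x ^ (m + 1) / ((m : ℝ) + 1) ^ n‖ := by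
  refine .of_nonneg_of_le (fun m ↦ norm_nonneg _) (fun m ↦ ?_)
    ((summable_geometric_of_lt_one hx0 hx1).mul_left x)
  rw [Real.norm_of_nonneg (by positivity), ← pow_succ']
  exact div_le_self (by positivity) (one_le_pow₀ (by simp))

theorem J_integrand_eq_tsum (s q : ℕ) {x : ℝ} (hx : x ∈ Set.Ioo (0 : ℝ) 1) :
    x ^ ((s : ℤ) - 2) * Li 1 x * Li q x
      = ∑' p : ℕ × ℕ, x ^ (p.1 + p.2 + s) / (((p.2 : ℝ) + 1) * ((p.1 : ℝ) + 1) ^ q) := by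
  obtain ⟨hx0, hx1⟩ := hx
  have hLi1 := Li_natCast_eq_tsum 1 x
  rw [Nat.cast_one] at hLi1
  rw [mul_assoc, mul_comm (Li 1 x), hLi1, Li_natCast_eq_tsum,
    tsum_mul_tsum_of_summable_norm (summable_norm_pow_succ_div hx0.le hx1 q)
      (summable_norm_pow_succ_div hx0.le hx1 1), ← tsum_mul_left]
  congr 1 with ⟨m, n⟩
  have hpow : x ^ ((s : ℤ) - 2) * (x ^ (m + 1) * x ^ (n + 1)) = x ^ (m + n + s) := by
    simp only [← zpow_natCast, ← zpow_add₀ hx0.ne']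
    congr 1
    push_cast
    ring
  rw [← hpow]
  field_simp

theorem integral_Ioo_pow (N : ℕ) : ∫ x in Set.Ioo (0 : ℝ) 1, x ^ N = 1 / ((N : ℝ) + 1) := by
  rw [← integral_Ioc_eq_integral_Ioo, ← intervalIntegral.integral_of_le zero_le_one,
    integral_pow]
  simp

theorem hasSum_jSeriesTerm (s : ℕ) {q : ℕ} (hq : 1 ≤ q) :
    HasSum (fun p : ℕ × ℕ ↦ jSeriesTerm s q p.1 p.2) (J ((s : ℤ) - 2) 1 q) := by
  set F : ℕ × ℕ → ℝ → ℝ :=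
    fun p x ↦ x ^ (p.1 + p.2 + s) / (((p.2 : ℝ) + 1) * ((p.1 : ℝ) + 1) ^ q)
  have hF_int (p : ℕ × ℕ) : ∫ x in Set.Ioo (0 : ℝ) 1, F p x = jSeriesTerm s q p.1 p.2 := by
    simp only [F, integral_div, integral_Ioo_pow, jSeriesTerm]
    push_cast
    field_simp
  have hF_norm (p : ℕ × ℕ) : ∫ x in Set.Ioo (0 : ℝ) 1, ‖F p x‖ = jSeriesTerm s q p.1 p.2 := by
    rw [← hF_int]
    refine setIntegral_congr_fun measurableSet_Ioo fun x hx ↦ Real.norm_of_nonneg ?_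
    have := hx.1
    positivity
  have h := hasSum_integral_of_summable_integral_norm
    (F := F) (μ := volume.restrict (Set.Ioo (0 : ℝ) 1))
    (fun p ↦ ((continuous_pow _).div_const _).integrableOn_Icc.mono_set Set.Ioo_subset_Icc_self)
    (by simpa only [hF_norm] using summable_jSeriesTerm s hq)
  simp only [hF_int] at h
  rwa [J, intervalIntegral.integral_of_le zero_le_one, integral_Ioc_eq_integral_Ioo,
    setIntegral_congr_fun measurableSet_Ioo fun x hx ↦ J_integrand_eq_tsum s q hx]

theorem hasSum_J (s : ℕ) {q : ℕ} (hq : 1 ≤ q) :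
    HasSum (fun m : ℕ ↦ innerSum (m + s) / ((m : ℝ) + 1) ^ q) (J ((s : ℤ) - 2) 1 q) :=
  (hasSum_jSeriesTerm s hq).prod_fiberwise (hasSum_jSeriesTerm_fiber s q)

/-- For every integer `q ≥ 2`, the integrals `J(-2,1,q)` satisfy
`J(-2,1,q) = ζ(q+1) + J(-2,1,q-1) - J(-1,1,q-1)`; furthermore `J(-2,1,1) = 2ζ(2)`. -/
theorem stmt13 (q : ℕ) (hq : 2 ≤ q) :
    J (-2) 1 q = zetaR (q + 1) + J (-2) 1 ((q : ℤ) - 1) - J (-1) 1 ((q : ℤ) - 1)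
      ∧ J (-2) 1 1 = 2 * zetaR 2 := by
  obtain ⟨r, rfl⟩ : ∃ r, q = r + 2 := ⟨q - 2, by omega⟩
  constructor
  · have hJ₀ := hasSum_J 0 (show 1 ≤ r + 2 by omega)
    have hJ₁ := hasSum_J 0 (show 1 ≤ r + 1 by omega)
    have hJ₂ := hasSum_J 1 (show 1 ≤ r + 1 by omega)
    have hζ := hasSum_zetaR (show 2 ≤ r + 3 by omega)
    have hsum := (hJ₀.add hJ₂).unique <| (hζ.add hJ₁).congr_fun fun m ↦ by
      simpa using innerSum_div_pow_add m (r + 1)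
    have hcast : ((r + 2 : ℕ) : ℤ) - 1 = ((r + 1 : ℕ) : ℤ) := by push_cast; ring
    rw [hcast]
    norm_num at hsum ⊢
    linarith
  · have hJ := hasSum_J 0 le_rfl
    norm_num at hJ
    exact hJ.unique hasSum_innerSum_div_succ
end

section
/- For all integers r ≥ 1 and q ≥ 2, K(r,0,q) = (-1)^{r+q} (r!/(q-1)!) K(q-1,0,r+1) + (-1)^r r! [ζ(r+1) ζ(q) - ζ(r+q+1)], where K(r,0,q) = ∫₀¹ log^r(x) Li_q(x)/(1-x) dx. -/
open MeasureTheory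

/-!
Expanding `Li_q(x)/(1-x) = ∑_{k ≥ 1, j ≥ 0} x^(k+j)/k^q` and integrating term by term against
`∫₀¹ log^r x · x^m dx = (-1)^r r!/(m+1)^(r+1)` (substitute `x = e^(-t)`, a Gamma integral) gives
`K(r,0,q) = (-1)^r r! ζ(r+1, q)`, with `ζ(s, t)` the double zeta value. The identity is then the
stuffle relation `ζ(s) ζ(t) = ζ(s, t) + ζ(t, s) + ζ(s + t)`, obtained by splitting the double sum
`∑_{m,n} m⁻ˢ n⁻ᵗ` into `n < m`, `m < n` and `m = n`.
-/

open Set Real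

lemma image_exp_neg_Ioi : (fun t : ℝ => exp (-t)) '' Ioi 0 = Ioo 0 1 := by
  ext x
  constructor
  · rintro ⟨t, ht, rfl⟩
    exact ⟨exp_pos _, exp_lt_one_iff.mpr (neg_lt_zero.mpr ht)⟩
  · rintro ⟨hx0, hx1⟩
    exact ⟨-log x, neg_pos.mpr (log_neg hx0 hx1), by simp [exp_log hx0]⟩

lemma hasDerivWithinAt_exp_neg (s : Set ℝ) (t : ℝ) :
    HasDerivWithinAt (fun t : ℝ => exp (-t)) (-exp (-t)) s t := by
  simpa using ((hasDerivAt_neg t).exp).hasDerivWithinAt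

lemma integrableOn_Ioo_zero_one_iff (g : ℝ → ℝ) :
    IntegrableOn g (Ioo 0 1) ↔ IntegrableOn (fun t => exp (-t) * g (exp (-t))) (Ioi 0) := by
  rw [← image_exp_neg_Ioi, integrableOn_image_iff_integrableOn_abs_deriv_smul measurableSet_Ioi
    (fun t _ => hasDerivWithinAt_exp_neg _ t) (Real.exp_injective.comp neg_injective).injOn]
  simp [abs_of_pos (exp_pos _)]

lemma integral_Ioo_zero_one_eq_integral_Ioi (g : ℝ → ℝ) :
    ∫ x in Ioo 0 1, g x = ∫ t in Ioi 0, exp (-t) * g (exp (-t)) := by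
  rw [← image_exp_neg_Ioi, integral_image_eq_integral_abs_deriv_smul measurableSet_Ioi
    (fun t _ => hasDerivWithinAt_exp_neg _ t) (Real.exp_injective.comp neg_injective).injOn]
  simp [abs_of_pos (exp_pos _)]

lemma exp_neg_mul_neg_log_pow_mul_pow (a m : ℕ) (t : ℝ) :
    exp (-t) * ((-log (exp (-t))) ^ a * exp (-t) ^ m) = t ^ a * exp (-((m + 1) * t)) := by
  rw [log_exp, neg_neg, ← exp_nat_mul, mul_left_comm, ← exp_add]
  ring_nf

lemma integrableOn_neg_log_pow_mul_pow (a m : ℕ) :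
    IntegrableOn (fun x => (-log x) ^ a * x ^ m) (Ioo 0 1) := by
  rw [integrableOn_Ioo_zero_one_iff]
  simp_rw [exp_neg_mul_neg_log_pow_mul_pow]
  refine (integrableOn_rpow_mul_exp_neg_mul_rpow (s := a) (p := 1) (b := m + 1)
    (by linarith [a.cast_nonneg (α := ℝ)]) one_pos m.cast_add_one_pos).congr_fun
    (fun t _ => ?_) measurableSet_Ioi
  simp only [rpow_one, rpow_natCast, neg_mul]

lemma integral_neg_log_pow_mul_pow (a m : ℕ) :
    ∫ x in Ioo 0 1, (-log x) ^ a * x ^ m = a.factorial / ((m : ℝ) + 1) ^ (a + 1) := by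
  have ha : ((a : ℝ) + 1) = ((a + 1 : ℕ) : ℝ) := by push_cast; rfl
  rw [integral_Ioo_zero_one_eq_integral_Ioi]
  simp_rw [exp_neg_mul_neg_log_pow_mul_pow]
  calc ∫ t in Ioi 0, t ^ a * exp (-((m + 1) * t))
      = ∫ t in Ioi 0, t ^ (((a : ℝ) + 1) - 1) * exp (-((m + 1) * t)) := by
        simp_rw [add_sub_cancel_right, rpow_natCast]
    _ = (1 / ((m : ℝ) + 1)) ^ ((a : ℝ) + 1) * Gamma ((a : ℝ) + 1) :=
        integral_rpow_mul_exp_neg_mul_Ioi a.cast_add_one_pos m.cast_add_one_pos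
    _ = a.factorial / ((m : ℝ) + 1) ^ (a + 1) := by
        rw [Gamma_nat_eq_factorial, ha, rpow_natCast, one_div_pow, one_div_mul_eq_div]

lemma summable_one_div_pnat_pow {s : ℕ} (hs : 1 < s) :
    Summable fun k : ℕ+ => 1 / ((k : ℕ) : ℝ) ^ s :=
  (Real.summable_one_div_nat_pow.mpr hs).comp_injective PNat.coe_injective

/-- The double zeta value `ζ(s, t) = ∑_{n > k ≥ 1} n⁻ˢ k⁻ᵗ`. -/
noncomputable def doubleZeta (s t : ℕ) : ℝ :=
  ∑' p : {p : ℕ+ × ℕ+ | p.2 < p.1}, 1 / ((p.1.1 : ℕ) : ℝ) ^ s * (1 / ((p.1.2 : ℕ) : ℝ) ^ t)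

lemma summable_one_div_pow_mul_one_div_pow {s t : ℕ} (hs : 1 < s) (ht : 1 < t) :
    Summable fun p : ℕ+ × ℕ+ => 1 / ((p.1 : ℕ) : ℝ) ^ s * (1 / ((p.2 : ℕ) : ℝ) ^ t) :=
  (summable_one_div_pnat_pow hs).mul_of_nonneg (summable_one_div_pnat_pow ht)
    (fun _ => by positivity) (fun _ => by positivity)

lemma zetaR_mul_zetaR {s t : ℕ} (hs : 1 < s) (ht : 1 < t) :
    zetaR s * zetaR t = doubleZeta s t + doubleZeta t s + zetaR (s + t) := by
  set f : ℕ+ × ℕ+ → ℝ := fun p => 1 / ((p.1 : ℕ) : ℝ) ^ s * (1 / ((p.2 : ℕ) : ℝ) ^ t)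
  have hf : Summable f := summable_one_div_pow_mul_one_div_pow hs ht
  set S : Set (ℕ+ × ℕ+) := {p | p.2 < p.1}
  set T : Set (ℕ+ × ℕ+) := {p | p.1 < p.2}
  set D : Set (ℕ+ × ℕ+) := range fun k => (k, k)
  have hsplit : ∀ p, f p = S.indicator f p + T.indicator f p + D.indicator f p := by
    rintro ⟨m, n⟩
    rcases lt_trichotomy m n with h | rfl | h
    · simp [S, T, D, h, h.not_gt, h.ne]
    · simp [S, T, D]
    · simp [S, T, D, h, h.not_gt, h.ne']
  have hS : ∑' p : S, f p = doubleZeta s t := rfl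
  have hT : ∑' p : T, f p = doubleZeta t s := by
    rw [← ((Equiv.prodComm ℕ+ ℕ+).subtypeEquiv fun _ => Iff.rfl : S ≃ T).tsum_eq]
    exact tsum_congr fun _ => mul_comm _ _
  have hD : ∑' p : D, f p = zetaR (s + t) := by
    rw [tsum_range f fun k l h => congrArg Prod.fst h]
    exact tsum_congr fun _ => by simp only [f, one_div_mul_one_div, pow_add]
  calc zetaR s * zetaR t = ∑' p, f p :=
        ((summable_one_div_pnat_pow hs).hasSum.mul (summable_one_div_pnat_pow ht).hasSum
          hf).tsum_eq.symm
    _ = ∑' p, (S.indicator f p + T.indicator f p + D.indicator f p) := tsum_congr hsplit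
    _ = ∑' p : S, f p + ∑' p : T, f p + ∑' p : D, f p := by
        rw [(hf.indicator S |>.add (hf.indicator T)).tsum_add (hf.indicator D),
          (hf.indicator S).tsum_add (hf.indicator T), tsum_subtype, tsum_subtype, tsum_subtype]
    _ = doubleZeta s t + doubleZeta t s + zetaR (s + t) := by rw [hS, hT, hD]

def pnatShiftEquiv : ℕ+ × ℕ ≃ {p : ℕ+ × ℕ+ | p.2 < p.1} where
  toFun c := ⟨(c.1 + c.2.succPNat, c.1), PNat.lt_add_right _ _⟩
  invFun p := (p.1.2, (p.1.1 : ℕ) - p.1.2 - 1)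
  left_inv c := by
    ext <;> simp
  right_inv p := by
    obtain ⟨⟨n, k⟩, h⟩ := p
    have h' : (k : ℕ) < n := h
    refine Subtype.ext (Prod.ext (PNat.eq ?_) rfl)
    simp only [PNat.add_coe, Nat.succPNat_coe]
    omega

lemma hasSum_doubleZeta {s t : ℕ} (hs : 1 < s) (ht : 1 < t) :
    HasSum (fun c : ℕ+ × ℕ => 1 / (((c.1 + c.2 : ℕ) : ℝ) + 1) ^ s * (1 / ((c.1 : ℕ) : ℝ) ^ t))
      (doubleZeta s t) := by
  have hterm : (fun c : ℕ+ × ℕ => 1 / (((c.1 + c.2 : ℕ) : ℝ) + 1) ^ s * (1 / ((c.1 : ℕ) : ℝ) ^ t))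
      = fun c => 1 / (((pnatShiftEquiv c).1.1 : ℕ) : ℝ) ^ s
          * (1 / (((pnatShiftEquiv c).1.2 : ℕ) : ℝ) ^ t) := by
    funext c
    simp [pnatShiftEquiv, add_assoc]
  rw [hterm]
  exact pnatShiftEquiv.hasSum_iff.mpr
    ((summable_one_div_pow_mul_one_div_pow hs ht).subtype _).hasSum

lemma hasSum_Li (b : ℕ) {x : ℝ} (hx0 : 0 ≤ x) (hx1 : x < 1) :
    HasSum (fun k : ℕ+ => x ^ (k : ℕ) / ((k : ℕ) : ℝ) ^ b) (Li b x) := by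
  simp only [Li, zpow_natCast]
  refine Summable.hasSum (Summable.of_nonneg_of_le (fun _ => by positivity) (fun k => ?_)
    ((summable_geometric_of_lt_one hx0 hx1).comp_injective PNat.coe_injective))
  exact div_le_self (pow_nonneg hx0 _) (one_le_pow₀ (Nat.one_le_cast.mpr k.pos))

lemma hasSum_Li_div_one_sub (b : ℕ) {x : ℝ} (hx0 : 0 ≤ x) (hx1 : x < 1) :
    HasSum (fun c : ℕ+ × ℕ => x ^ (c.1 + c.2 : ℕ) / ((c.1 : ℕ) : ℝ) ^ b) (Li b x / (1 - x)) := by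
  have hLi := hasSum_Li b hx0 hx1
  have hgeom := hasSum_geometric_of_lt_one hx0 hx1
  have hterm : (fun c : ℕ+ × ℕ => x ^ (c.1 + c.2 : ℕ) / ((c.1 : ℕ) : ℝ) ^ b)
      = fun c => x ^ (c.1 : ℕ) / ((c.1 : ℕ) : ℝ) ^ b * x ^ c.2 := by
    funext c
    ring
  rw [hterm, div_eq_mul_inv]
  exact hLi.mul hgeom (hLi.summable.mul_of_nonneg hgeom.summable (fun _ => by positivity)
    (fun _ => by positivity))

theorem integral_log_pow_mul_Li_div_one_sub {a b : ℕ} (ha : 0 < a) (hb : 1 < b) :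
    ∫ x in (0 : ℝ)..1, log x ^ a * Li b x / (1 - x)
      = (-1) ^ a * a.factorial * doubleZeta (a + 1) b := by
  set F : ℕ+ × ℕ → ℝ → ℝ := fun c x => (-log x) ^ a * (x ^ (c.1 + c.2 : ℕ) / ((c.1 : ℕ) : ℝ) ^ b)
  have hF_int (c : ℕ+ × ℕ) : Integrable (F c) (volume.restrict (Ioo 0 1)) := by
    simpa only [F, mul_div_assoc] using (integrableOn_neg_log_pow_mul_pow a _).div_const _
  have hF_integral (c : ℕ+ × ℕ) : ∫ x in Ioo 0 1, F c x
      = a.factorial * (1 / (((c.1 + c.2 : ℕ) : ℝ) + 1) ^ (a + 1) * (1 / ((c.1 : ℕ) : ℝ) ^ b)) := by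
    simp only [F, ← mul_div_assoc, integral_div, integral_neg_log_pow_mul_pow]
    ring
  have hF_norm (c : ℕ+ × ℕ) : ∫ x in Ioo 0 1, ‖F c x‖ = ∫ x in Ioo 0 1, F c x :=
    setIntegral_congr_fun measurableSet_Ioo fun x hx => Real.norm_of_nonneg <|
      mul_nonneg (pow_nonneg (neg_nonneg.mpr (log_nonpos hx.1.le hx.2.le)) _)
        (div_nonneg (pow_nonneg hx.1.le _) (by positivity))
  have hsum := hasSum_integral_of_summable_integral_norm hF_int <| by
    simp_rw [hF_norm, hF_integral]
    exact ((hasSum_doubleZeta (by omega) hb).mul_left _).summable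
  have hexpand : ∀ x ∈ Ioo (0 : ℝ) 1, log x ^ a * Li b x / (1 - x) = (-1) ^ a * ∑' c, F c x := by
    intro x hx
    rw [((hasSum_Li_div_one_sub b hx.1.le hx.2).mul_left ((-log x) ^ a)).tsum_eq, mul_div_assoc,
      ← mul_assoc, ← mul_pow, neg_one_mul, neg_neg]
  calc ∫ x in (0 : ℝ)..1, log x ^ a * Li b x / (1 - x)
      = ∫ x in Ioo 0 1, (-1) ^ a * ∑' c, F c x := by
        rw [intervalIntegral.integral_of_le zero_le_one, integral_Ioc_eq_integral_Ioo]
        exact setIntegral_congr_fun measurableSet_Ioo hexpand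
    _ = (-1) ^ a * ∑' c, ∫ x in Ioo 0 1, F c x := by rw [integral_const_mul, hsum.tsum_eq]
    _ = (-1) ^ a * a.factorial * doubleZeta (a + 1) b := by
        simp_rw [hF_integral]
        rw [tsum_mul_left, (hasSum_doubleZeta (by omega) hb).tsum_eq, mul_assoc]

/-- For integers `r ≥ 1` and `q ≥ 2`, with `K(r,0,q) = ∫₀¹ log^r(x) Li_q(x)/(1-x) dx`,
`K(r,0,q) = (-1)^(r+q)(r!/(q-1)!) K(q-1,0,r+1) + (-1)^r r! (ζ(r+1)ζ(q) - ζ(r+q+1))`. -/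
theorem stmt15 (r q : ℕ) (hr : 1 ≤ r) (hq : 2 ≤ q) :
    (∫ x in (0:ℝ)..1, Real.log x ^ r * Li q x / (1 - x))
      = (-1) ^ (r + q) * ((r.factorial : ℝ) / ((q - 1).factorial : ℝ))
            * (∫ x in (0:ℝ)..1, Real.log x ^ (q - 1) * Li (r + 1) x / (1 - x))
        + (-1) ^ r * (r.factorial : ℝ) * (zetaR (r + 1) * zetaR q - zetaR (r + q + 1)) := by
  obtain ⟨p, rfl⟩ : ∃ p, q = p + 1 := ⟨q - 1, by omega⟩
  have hLi : ((r : ℤ) + 1) = ((r + 1 : ℕ) : ℤ) := by push_cast; rfl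
  have hsign : (-1 : ℝ) ^ (r + (p + 1)) * (-1) ^ p = -(-1) ^ r := by
    rw [← pow_add, show r + (p + 1) + p = r + 1 + 2 * p by ring, pow_add, pow_mul, neg_one_sq,
      one_pow, mul_one, pow_succ, mul_neg_one]
  rw [hLi, Nat.add_sub_cancel, integral_log_pow_mul_Li_div_one_sub hr hq,
    integral_log_pow_mul_Li_div_one_sub (by omega) (by omega),
    zetaR_mul_zetaR (by omega) hq, show r + 1 + (p + 1) = r + (p + 1) + 1 by ring]
  field_simp
  rw [hsign]
  ring
end
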